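/- arXiv:1910.04499 — 2 statements merged into one kernel-verified Lean document; each statement's English description precedes it below -/
import Mathlib

section
/- (GCN information preservation) Suppose y^{(l)} = P^{(l)}(W^{(l)} ⊗ A) ⋯ P^{(1)}(W^{(1)} ⊗ A) x, where each P^{(i)} is diagonal with entries in {a, 1}, a ∈ (0,1). Let γ_A = min_j λ_j(A) and γ_W = inf_i min_j λ_j(W^{(i)}). If a γ_A γ_W ≥ 1, then for every l the matrix P^{(l)}(W^{(l)} ⊗ A) ⋯ P^{(1)}(W^{(1)} ⊗ A) is invertible; consequently, for discrete x, I(x; y^{(l)}) = H(x) and the information loss H(x | y^{(l)}) = 0. -/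
/-!
Each layer `P⁽ⁱ⁾ (W⁽ⁱ⁾ ⊗ A)` is invertible: `P⁽ⁱ⁾` is diagonal with nonzero entries, and the
hypothesis forces the smallest singular values of `A` and of every `W⁽ⁱ⁾` to be positive, so
`Aᴴ A` and `W⁽ⁱ⁾ᴴ W⁽ⁱ⁾` have nonzero determinant. A product of invertible matrices is
invertible, and an injective function of a random element has the same level sets, hence the
same entropy; applied to `y` and to `(x, y)` this gives `I(x; y) = H(x)` and `H(x | y) = 0`.
-/

open Matrix
open scoped Kronecker
open MeasureTheory

/-- Shannon entropy of a discrete random element `X` under the measure `μ`. -/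
noncomputable def entropy {Ω : Type*} [MeasurableSpace Ω] (μ : Measure Ω)
    {S : Type*} (X : Ω → S) : ℝ :=
  ∑' s : S, Real.negMulLog (μ (X ⁻¹' {s})).toReal

/-- Mutual information `I(X; Y) = H(X) + H(Y) - H(X, Y)`. -/
noncomputable def mutualInfo {Ω : Type*} [MeasurableSpace Ω] (μ : Measure Ω)
    {S T : Type*} (X : Ω → S) (Y : Ω → T) : ℝ :=
  entropy μ X + entropy μ Y - entropy μ (fun ω => (X ω, Y ω))

/-- Conditional entropy `H(X | Y) = H(X, Y) - H(Y)`. -/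
noncomputable def condEntropy {Ω : Type*} [MeasurableSpace Ω] (μ : Measure Ω)
    {S T : Type*} (X : Ω → S) (Y : Ω → T) : ℝ :=
  entropy μ (fun ω => (X ω, Y ω)) - entropy μ Y

/-- Singular values of a real square matrix: square roots of the eigenvalues of `Mᵀ M`. -/
noncomputable def singularValues {m : Type*} [Fintype m] [DecidableEq m]
    (M : Matrix m m ℝ) : m → ℝ :=
  fun i => Real.sqrt ((Matrix.isHermitian_conjTranspose_mul_self M).eigenvalues i)

/-- `chain f l = f l * ⋯ * f 2 * f 1` (and `chain f 0 = 1`). -/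
def chain {m : Type*} [Fintype m] [DecidableEq m]
    (f : ℕ → Matrix m m ℝ) : ℕ → Matrix m m ℝ
  | 0 => 1
  | l + 1 => f (l + 1) * chain f l

section Entropy

variable {Ω S T : Type*} [MeasurableSpace Ω] (μ : Measure Ω) (X : Ω → S)

theorem entropy_comp_of_injective {f : S → T} (hf : Function.Injective f) :
    entropy μ (fun ω => f (X ω)) = entropy μ X := by
  have hfiber : ∀ s, (fun ω => f (X ω)) ⁻¹' {f s} = X ⁻¹' {s} := fun s => by
    ext ω; simp [hf.eq_iff]
  have hsupport : Function.support
      (fun t => Real.negMulLog (μ ((fun ω => f (X ω)) ⁻¹' {t})).toReal) ⊆ Set.range f := by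
    intro t ht
    by_contra hnot
    have hempty : (fun ω => f (X ω)) ⁻¹' {t} = ∅ :=
      Set.eq_empty_of_forall_notMem fun ω hω => hnot ⟨X ω, hω⟩
    simp [hempty] at ht
  calc entropy μ (fun ω => f (X ω))
      = ∑' s, Real.negMulLog (μ ((fun ω => f (X ω)) ⁻¹' {f s})).toReal :=
        (hf.tsum_eq hsupport).symm
    _ = entropy μ X := tsum_congr fun s => by rw [hfiber s]

theorem entropy_prod_comp (f : S → T) :
    entropy μ (fun ω => (X ω, f (X ω))) = entropy μ X :=
  entropy_comp_of_injective μ X (f := fun s => (s, f s)) fun _ _ h => congrArg Prod.fst h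

theorem mutualInfo_comp_of_injective {f : S → T} (hf : Function.Injective f) :
    mutualInfo μ X (fun ω => f (X ω)) = entropy μ X := by
  rw [mutualInfo, entropy_comp_of_injective μ X hf, entropy_prod_comp]
  ring

theorem condEntropy_comp_of_injective {f : S → T} (hf : Function.Injective f) :
    condEntropy μ X (fun ω => f (X ω)) = 0 := by
  rw [condEntropy, entropy_comp_of_injective μ X hf, entropy_prod_comp, sub_self]

end Entropy

section SingularValues

variable {m : Type*} [Fintype m] [DecidableEq m]

theorem singularValues_nonneg (M : Matrix m m ℝ) (j : m) : 0 ≤ singularValues M j :=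
  Real.sqrt_nonneg _

theorem iInf_singularValues_nonneg (M : Matrix m m ℝ) : 0 ≤ ⨅ j, singularValues M j :=
  Real.iInf_nonneg (singularValues_nonneg M)

theorem iInf_singularValues_le (M : Matrix m m ℝ) (j : m) :
    ⨅ k, singularValues M k ≤ singularValues M j :=
  ciInf_le ⟨0, Set.forall_mem_range.mpr (singularValues_nonneg M)⟩ j

theorem isUnit_of_singularValues_pos {M : Matrix m m ℝ} (h : ∀ j, 0 < singularValues M j) :
    IsUnit M := by
  have hgram := isHermitian_conjTranspose_mul_self M
  have hdet : (Mᴴ * M).det ≠ 0 := by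
    rw [hgram.det_eq_prod_eigenvalues]
    exact_mod_cast (Finset.prod_pos fun j _ => Real.sqrt_pos.mp (h j)).ne'
  rw [isUnit_iff_isUnit_det, isUnit_iff_ne_zero]
  intro h0
  simp [det_mul, h0] at hdet

theorem isUnit_of_iInf_singularValues_pos {M : Matrix m m ℝ}
    (h : 0 < ⨅ j, singularValues M j) : IsUnit M :=
  isUnit_of_singularValues_pos fun j => h.trans_le (iInf_singularValues_le M j)

end SingularValues

section Invertibility

variable {m n R : Type*} [Fintype m] [DecidableEq m] [Fintype n] [DecidableEq n] [CommRing R]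

theorem Matrix.IsDiag.isUnit {M : Matrix n n R} (hM : M.IsDiag) (h : ∀ i, IsUnit (M i i)) :
    IsUnit M := by
  rw [← hM.diagonal_diag, isUnit_diagonal]
  exact Pi.isUnit_iff.mpr h

theorem Matrix.isUnit_kronecker {A : Matrix m m R} {B : Matrix n n R} (hA : IsUnit A)
    (hB : IsUnit B) : IsUnit (A ⊗ₖ B) := by
  rw [isUnit_iff_isUnit_det, det_kronecker]
  exact (((isUnit_iff_isUnit_det A).mp hA).pow _).mul (((isUnit_iff_isUnit_det B).mp hB).pow _)

theorem isUnit_chain {f : ℕ → Matrix m m ℝ} (hf : ∀ i, IsUnit (f i)) (l : ℕ) :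
    IsUnit (chain f l) := by
  induction l with
  | zero => exact isUnit_one
  | succ l ih => exact (hf _).mul ih

end Invertibility

theorem gcn_information_preservation_general {Ω : Type*} [MeasurableSpace Ω] (μ : Measure Ω)
    {n d : ℕ} (a : ℝ) (ha : a ∈ Set.Ioo (0 : ℝ) 1)
    (A : Matrix (Fin n) (Fin n) ℝ) (W : ℕ → Matrix (Fin d) (Fin d) ℝ)
    (P : ℕ → Matrix (Fin d × Fin n) (Fin d × Fin n) ℝ)
    (hP : ∀ i, (P i).IsDiag ∧ ∀ p, P i p p = a ∨ P i p p = 1)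
    (h : 1 ≤ a * (⨅ j, singularValues A j) * (⨅ i, ⨅ j, singularValues (W i) j))
    (X : Ω → (Fin d × Fin n → ℝ)) :
    ∀ l : ℕ,
      IsUnit (chain (fun i => P i * ((W i) ⊗ₖ A)) l) ∧
      mutualInfo μ X (fun ω => (chain (fun i => P i * ((W i) ⊗ₖ A)) l).mulVec (X ω)) =
        entropy μ X ∧
      condEntropy μ X (fun ω => (chain (fun i => P i * ((W i) ⊗ₖ A)) l).mulVec (X ω)) = 0 := by
  have hprod : 0 < a * (⨅ j, singularValues A j) * (⨅ i, ⨅ j, singularValues (W i) j) := by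
    linarith
  have hγW : 0 < ⨅ i, ⨅ j, singularValues (W i) j :=
    pos_of_mul_pos_right hprod (mul_nonneg ha.1.le (iInf_singularValues_nonneg A))
  have hA : IsUnit A := isUnit_of_iInf_singularValues_pos <| pos_of_mul_pos_right
    (pos_of_mul_pos_left hprod (Real.iInf_nonneg fun i => iInf_singularValues_nonneg (W i)))
    ha.1.le
  have hW : ∀ i, IsUnit (W i) := fun i => isUnit_of_iInf_singularValues_pos <| hγW.trans_le <|
    ciInf_le ⟨0, Set.forall_mem_range.mpr fun i => iInf_singularValues_nonneg (W i)⟩ i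
  have hP' : ∀ i, IsUnit (P i) := fun i => (hP i).1.isUnit fun p =>
    (hP i).2 p |>.elim (fun hp => hp ▸ ha.1.ne'.isUnit) (fun hp => hp ▸ isUnit_one)
  intro l
  have hM := isUnit_chain (fun i => (hP' i).mul (isUnit_kronecker (hW i) hA)) l
  have hinj := mulVec_injective_iff_isUnit.mpr hM
  exact ⟨hM, mutualInfo_comp_of_injective μ X hinj, condEntropy_comp_of_injective μ X hinj⟩

/-- (GCN information preservation) If `y^{(l)} = P^{(l)}(W^{(l)} ⊗ A) ⋯ P^{(1)}(W^{(1)} ⊗ A) x`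
with each `P^{(i)}` diagonal with entries in `{a, 1}`, `a ∈ (0,1)`, and
`a · γ_A · γ_W ≥ 1` where `γ_A = min_j λ_j(A)` and `γ_W = inf_i min_j λ_j(W^{(i)})`, then
each total map is invertible; consequently `I(x; y^{(l)}) = H(x)` and `H(x | y^{(l)}) = 0`. -/
theorem gcn_information_preservation {Ω : Type*} [MeasurableSpace Ω] (μ : Measure Ω)
    [IsProbabilityMeasure μ] {n d : ℕ} (a : ℝ) (ha : a ∈ Set.Ioo (0 : ℝ) 1)
    (A : Matrix (Fin n) (Fin n) ℝ) (W : ℕ → Matrix (Fin d) (Fin d) ℝ)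
    (P : ℕ → Matrix (Fin d × Fin n) (Fin d × Fin n) ℝ)
    (hP : ∀ i, (P i).IsDiag ∧ ∀ p, P i p p = a ∨ P i p p = 1)
    (h : 1 ≤ a * (⨅ j, singularValues A j) * (⨅ i, ⨅ j, singularValues (W i) j))
    (X : Ω → (Fin d × Fin n → ℝ)) (hXfin : (Set.range X).Finite)
    (hXmeas : ∀ v : Fin d × Fin n → ℝ, MeasurableSet (X ⁻¹' {v})) :
    ∀ l : ℕ,
      IsUnit (chain (fun i => P i * ((W i) ⊗ₖ A)) l) ∧
      mutualInfo μ X (fun ω => (chain (fun i => P i * ((W i) ⊗ₖ A)) l).mulVec (X ω)) =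
        entropy μ X ∧
      condEntropy μ X (fun ω => (chain (fun i => P i * ((W i) ⊗ₖ A)) l).mulVec (X ω)) = 0 :=
  gcn_information_preservation_general μ a ha A W P hP h X
end

section
/- Let A ∈ ℝ^{n×n} with SVD-based decomposition A_k = U_A S_k V_Aᵀ as above, and weight matrices W_k^{(i)} ∈ ℝ^{d×d}. Set σ_{A_k} = λ_k(A) and σ_{W_k} = sup_i max_j λ_j(W_k^{(i)}). If σ_{A_k} σ_{W_k} < 1 for every k ∈ {1,...,n}, then the largest singular value of Σ_k W_k^{(i)} ⊗ A_k is at most max_k σ_{A_k} σ_{W_k} < 1, and hence the operator norm of any l-fold product P^{(l)} (Σ_{k} W_k^{(l)} ⊗ A_k) ⋯ P^{(1)} (Σ_k W_k^{(1)} ⊗ A_k), with each P^{(i)} diagonal having entries in (0,1], tends to 0 as l → ∞. -/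
open Matrix
open scoped Kronecker

/-- The `k`-th rank-one SVD component `A_k = U S_k Vᵀ`, where `S_k` keeps only the `k`-th
singular value of `S = diag σ`. -/
noncomputable def svdPart {n : ℕ} (U V : Matrix (Fin n) (Fin n) ℝ) (σ : Fin n → ℝ)
    (k : Fin n) : Matrix (Fin n) (Fin n) ℝ :=
  U * Matrix.diagonal (fun m => if m = k then σ k else 0) * Vᵀ

/-!
In the basis change `1 ⊗ U`, `1 ⊗ Vᵀ`, which is orthogonal, the matrix `Σ_k W_k ⊗ A_k` becomes
the block-diagonal matrix with blocks `σ_k W_k`. Its spectral norm, which is its largest singular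
value, is therefore `max_k σ_k ‖W_k‖ ≤ max_k σ_{A_k} σ_{W_k} =: c < 1`. The diagonal matrices
`P^{(i)}` have spectral norm at most `1`, so by submultiplicativity the `l`-fold product has
norm at most `c ^ l → 0`.
-/

open scoped Matrix.Norms.L2Operator

namespace Matrix

section Algebra

variable {α m n o : Type*} [Fintype o] [DecidableEq o]

theorem blockDiagonal_mulVec [Fintype n] [NonUnitalNonAssocSemiring α] (M : o → Matrix m n α)
    (v : n × o → α) (i : m) (k : o) :
    (blockDiagonal M *ᵥ v) (i, k) = (M k *ᵥ fun j => v (j, k)) i := by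
  simp [mulVec, dotProduct, blockDiagonal_apply, Fintype.sum_prod_type_right]

theorem sum_kronecker_diagonal_single [CommSemiring α] (A : o → Matrix m n α) (s : o → α) :
    ∑ k, A k ⊗ₖ diagonal (Pi.single k (s k)) = blockDiagonal fun k => s k • A k := by
  ext ⟨i, a⟩ ⟨j, b⟩
  by_cases hab : a = b
  · subst hab
    simp [sum_apply, blockDiagonal_apply, Pi.single_apply, mul_comm]
  · simp [sum_apply, blockDiagonal_apply, hab]

end Algebra

variable {𝕜 m n o : Type*} [RCLike 𝕜] [Fintype m] [Fintype n] [Fintype o] [DecidableEq n]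

theorem l2_opNorm_blockDiagonal_le [DecidableEq o] {M : o → Matrix m n 𝕜} {c : ℝ} (hc : 0 ≤ c)
    (hM : ∀ k, ‖M k‖ ≤ c) : ‖blockDiagonal M‖ ≤ c := by
  rw [l2_opNorm_def]
  refine ContinuousLinearMap.opNorm_le_bound _ hc fun x => ?_
  refine (sq_le_sq₀ (by positivity) (by positivity)).mp ?_
  set xs : o → EuclideanSpace 𝕜 n := fun k => WithLp.toLp 2 fun j => x (j, k)
  have hx : ‖x‖ ^ 2 = ∑ k, ‖xs k‖ ^ 2 := by
    simp [xs, EuclideanSpace.norm_sq_eq, Fintype.sum_prod_type_right]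
  calc _ = ∑ k, ‖(EuclideanSpace.equiv m 𝕜).symm (M k *ᵥ xs k)‖ ^ 2 := by
        simp [xs, EuclideanSpace.norm_sq_eq, Fintype.sum_prod_type_right, blockDiagonal_mulVec]
    _ ≤ ∑ k, (c * ‖xs k‖) ^ 2 := by
        gcongr with k
        exact (l2_opNorm_mulVec (M k) (xs k)).trans (by gcongr; exact hM k)
    _ = (c * ‖x‖) ^ 2 := by simp only [mul_pow, hx, Finset.mul_sum]

theorem IsHermitian.l2_opNorm_eq_norm_eigenvalues {A : Matrix n n 𝕜} (hA : A.IsHermitian) :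
    ‖A‖ = ‖hA.eigenvalues‖ := by
  conv_lhs => rw [hA.spectral_theorem, Unitary.conjStarAlgAut_apply,
    CStarRing.norm_mul_mem_unitary _ (Unitary.star_mem (SetLike.coe_mem _)),
    CStarRing.norm_mem_unitary_mul _ (SetLike.coe_mem _), l2_opNorm_diagonal]
  simp [Pi.norm_def]

theorem IsDiag.l2_opNorm_le {A : Matrix n n 𝕜} (hA : A.IsDiag) {c : ℝ} (hc : 0 ≤ c)
    (h : ∀ i, ‖A i i‖ ≤ c) : ‖A‖ ≤ c := by
  rw [← hA.diagonal_diag, l2_opNorm_diagonal]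
  exact (pi_norm_le_iff_of_nonneg hc).2 h

theorem l2_opNorm_one_le : ‖(1 : Matrix n n 𝕜)‖ ≤ 1 := by
  rw [← diagonal_one, l2_opNorm_diagonal]
  exact (pi_norm_le_iff_of_nonneg zero_le_one).2 fun i => by simp

theorem mem_unitary_iff_transpose {α : Type*} [Semiring α] [StarRing α] [TrivialStar α]
    {U : Matrix n n α} : U ∈ unitary (Matrix n n α) ↔ Uᵀ * U = 1 ∧ U * Uᵀ = 1 := by
  rw [Unitary.mem_iff, star_eq_conjTranspose, conjTranspose_eq_transpose_of_trivial]

end Matrix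

theorem l2_opNorm_eq_iSup_singularValues {m : Type*} [Fintype m] [DecidableEq m]
    (M : Matrix m m ℝ) : ‖M‖ = ⨆ p, singularValues M p := by
  set e := (isHermitian_conjTranspose_mul_self M).eigenvalues
  have he : ∀ p, 0 ≤ e p := (posSemidef_conjTranspose_mul_self M).eigenvalues_nonneg
  have hM : ‖M‖ = √‖e‖ := by
    rw [← IsHermitian.l2_opNorm_eq_norm_eigenvalues, l2_opNorm_conjTranspose_mul_self,
      Real.sqrt_mul_self (norm_nonneg M)]
  rw [hM]
  refine le_antisymm ?_ (Real.iSup_le (fun p => Real.sqrt_le_sqrt ?_) (Real.sqrt_nonneg _))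
  · have ht : ∀ p, √(e p) ≤ ⨆ q, singularValues M q :=
      le_ciSup (f := singularValues M) (Finite.bddAbove_range _)
    refine Real.sqrt_le_iff.2 ⟨Real.iSup_nonneg fun p => Real.sqrt_nonneg _,
      (pi_norm_le_iff_of_nonneg (sq_nonneg _)).2 fun p => ?_⟩
    rw [Real.norm_of_nonneg (he p)]
    exact (Real.sqrt_le_iff.1 (ht p)).2
  · exact (le_abs_self _).trans (norm_le_pi_norm e p)

theorem norm_chain_le {m : Type*} [Fintype m] [DecidableEq m] {f : ℕ → Matrix m m ℝ} {c : ℝ}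
    (hc : 0 ≤ c) (hf : ∀ i, ‖f i‖ ≤ c) : ∀ l, ‖chain f l‖ ≤ c ^ l
  | 0 => by simpa [chain] using l2_opNorm_one_le
  | l + 1 => by
    rw [chain, pow_succ']
    exact (l2_opNorm_mul _ _).trans (mul_le_mul (hf _) (norm_chain_le hc hf l) (norm_nonneg _) hc)

theorem svdPart_eq {n : ℕ} (U V : Matrix (Fin n) (Fin n) ℝ) (σ : Fin n → ℝ) (k : Fin n) :
    svdPart U V σ k = U * diagonal (Pi.single k (σ k)) * Vᵀ := by
  simp only [svdPart, ← Pi.single_apply]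

theorem sum_kronecker_svdPart {n d : ℕ} (U V : Matrix (Fin n) (Fin n) ℝ) (σ : Fin n → ℝ)
    (W : Fin n → Matrix (Fin d) (Fin d) ℝ) :
    ∑ k, W k ⊗ₖ svdPart U V σ k =
      ((1 : Matrix (Fin d) (Fin d) ℝ) ⊗ₖ U) * blockDiagonal (fun k => σ k • W k) * (1 ⊗ₖ Vᵀ) := by
  simp only [svdPart_eq, ← sum_kronecker_diagonal_single, Finset.mul_sum, Finset.sum_mul,
    ← mul_kronecker_mul, one_mul, mul_one]

theorem l2_opNorm_sum_kronecker_svdPart_le {n d : ℕ} {U V : Matrix (Fin n) (Fin n) ℝ}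
    (hU : Uᵀ * U = 1 ∧ U * Uᵀ = 1) (hV : Vᵀ * V = 1 ∧ V * Vᵀ = 1) {σ : Fin n → ℝ}
    (hσ : ∀ k, 0 ≤ σ k) {W : Fin n → Matrix (Fin d) (Fin d) ℝ} {c : ℝ} (hc : 0 ≤ c)
    (hW : ∀ k, σ k * ‖W k‖ ≤ c) :
    ‖∑ k, W k ⊗ₖ svdPart U V σ k‖ ≤ c := by
  have hVt : Vᵀ ∈ unitary (Matrix (Fin n) (Fin n) ℝ) :=
    mem_unitary_iff_transpose.2 (by simpa only [transpose_transpose] using hV.symm)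
  have h1 := one_mem (unitary (Matrix (Fin d) (Fin d) ℝ))
  have h1U := kronecker_mem_unitary h1 (mem_unitary_iff_transpose.2 hU)
  have h1Vt := kronecker_mem_unitary h1 hVt
  rw [sum_kronecker_svdPart, CStarRing.norm_mul_mem_unitary _ h1Vt,
    CStarRing.norm_mem_unitary_mul _ h1U]
  refine l2_opNorm_blockDiagonal_le hc fun k => ?_
  rw [norm_smul, Real.norm_of_nonneg (hσ k)]
  exact hW k

theorem decomposed_gcn_norm_tendsto_zero_general {n d : ℕ}
    (U V : Matrix (Fin n) (Fin n) ℝ)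
    (hU : Uᵀ * U = 1 ∧ U * Uᵀ = 1) (hV : Vᵀ * V = 1 ∧ V * Vᵀ = 1)
    (σ : Fin n → ℝ) (hσ : ∀ k, 0 ≤ σ k)
    (W : ℕ → Fin n → Matrix (Fin d) (Fin d) ℝ)
    (hbdd : ∀ k, BddAbove (Set.range fun i => ⨆ j, singularValues (W i k) j))
    (hlt : ∀ k, σ k * (⨆ i, ⨆ j, singularValues (W i k) j) < 1)
    (P : ℕ → Matrix (Fin d × Fin n) (Fin d × Fin n) ℝ)
    (hP : ∀ i, (P i).IsDiag ∧ ∀ p, P i p p ∈ Set.Ioc (0 : ℝ) 1) :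
    (∀ i, (⨆ p, singularValues (∑ k, (W i k) ⊗ₖ svdPart U V σ k) p) ≤
        ⨆ k, σ k * (⨆ i', ⨆ j, singularValues (W i' k) j)) ∧
    (⨆ k, σ k * (⨆ i', ⨆ j, singularValues (W i' k) j)) < 1 ∧
    Filter.Tendsto
      (fun l => ⨆ p,
        singularValues (chain (fun i => P i * ∑ k, (W i k) ⊗ₖ svdPart U V σ k) l) p)
      Filter.atTop (nhds 0) := by
  simp only [← l2_opNorm_eq_iSup_singularValues] at hbdd hlt ⊢
  set c := ⨆ k, σ k * ⨆ i, ‖W i k‖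
  have hc0 : 0 ≤ c :=
    Real.iSup_nonneg fun k => mul_nonneg (hσ k) (Real.iSup_nonneg fun i => norm_nonneg _)
  have hstep (i : ℕ) : ‖∑ k, W i k ⊗ₖ svdPart U V σ k‖ ≤ c :=
    l2_opNorm_sum_kronecker_svdPart_le hU hV hσ hc0 fun k =>
      (mul_le_mul_of_nonneg_left (le_ciSup (hbdd k) i) (hσ k)).trans
        (le_ciSup (f := fun k => σ k * ⨆ i, ‖W i k‖) (Finite.bddAbove_range _) k)
  have hc1 : c < 1 := by
    rcases isEmpty_or_nonempty (Fin n) with _ | _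
    · simp [c] -- a supremum over the empty index is `0` in `ℝ`
    · obtain ⟨k, hk⟩ := Finite.exists_max fun k => σ k * ⨆ i, ‖W i k‖
      exact (ciSup_le hk).trans_lt (hlt k)
  have hP1 (i : ℕ) : ‖P i‖ ≤ 1 :=
    (hP i).1.l2_opNorm_le zero_le_one fun p => by
      obtain ⟨hpos, hle⟩ := (hP i).2 p
      rwa [Real.norm_of_nonneg hpos.le]
  have hfactor (i : ℕ) : ‖P i * ∑ k, W i k ⊗ₖ svdPart U V σ k‖ ≤ c :=
    (l2_opNorm_mul _ _).trans <|
      (mul_le_mul (hP1 i) (hstep i) (norm_nonneg _) zero_le_one).trans_eq (one_mul c)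
  exact ⟨hstep, hc1, squeeze_zero (fun _ => norm_nonneg _) (norm_chain_le hc0 hfactor)
    (tendsto_pow_atTop_nhds_zero_of_lt_one hc0 hc1)⟩

/-- If `σ_{A_k} σ_{W_k} < 1` for every `k` (with `σ_{A_k} = λ_k(A)` and
`σ_{W_k} = sup_i max_j λ_j(W_k^{(i)})`), then the largest singular value of every
`Σ_k W_k^{(i)} ⊗ A_k` is at most `max_k σ_{A_k} σ_{W_k} < 1`, and the operator norm of the
`l`-fold product `P^{(l)} (Σ_k W_k^{(l)} ⊗ A_k) ⋯ P^{(1)} (Σ_k W_k^{(1)} ⊗ A_k)`, with each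
`P^{(i)}` diagonal with entries in `(0,1]`, tends to 0 as `l → ∞`. -/
theorem decomposed_gcn_norm_tendsto_zero {n d : ℕ} (hn : 0 < n)
    (U V : Matrix (Fin n) (Fin n) ℝ)
    (hU : Uᵀ * U = 1 ∧ U * Uᵀ = 1) (hV : Vᵀ * V = 1 ∧ V * Vᵀ = 1)
    (σ : Fin n → ℝ) (hσ : ∀ k, 0 ≤ σ k)
    (W : ℕ → Fin n → Matrix (Fin d) (Fin d) ℝ)
    (hbdd : ∀ k, BddAbove (Set.range fun i => ⨆ j, singularValues (W i k) j))
    (hlt : ∀ k, σ k * (⨆ i, ⨆ j, singularValues (W i k) j) < 1)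
    (P : ℕ → Matrix (Fin d × Fin n) (Fin d × Fin n) ℝ)
    (hP : ∀ i, (P i).IsDiag ∧ ∀ p, P i p p ∈ Set.Ioc (0 : ℝ) 1) :
    (∀ i, (⨆ p, singularValues (∑ k, (W i k) ⊗ₖ svdPart U V σ k) p) ≤
        ⨆ k, σ k * (⨆ i', ⨆ j, singularValues (W i' k) j)) ∧
    (⨆ k, σ k * (⨆ i', ⨆ j, singularValues (W i' k) j)) < 1 ∧
    Filter.Tendsto
      (fun l => ⨆ p,
        singularValues (chain (fun i => P i * ∑ k, (W i k) ⊗ₖ svdPart U V σ k) l) p)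
      Filter.atTop (nhds 0) :=
  decomposed_gcn_norm_tendsto_zero_general U V hU hV σ hσ W hbdd hlt P hP
end
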